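/- Let (A,B,P,Q,μ,ν) be a graded Morita context with idempotent graded rings, unital bimodules and surjective trace maps, and let K be a unital torsion-free graded left A-module. Then the canonical map φ : P ⊗_B (B·HOM_A(P,K)) → A·HOM_A(A,K), given by φ(p⊗f)(x) = f(xp) = x·f(p), is a surjective graded left A-module homomorphism of degree e whose kernel is left A-torsion. -/

import Mathlib

/-!
Common infrastructure: non-unital (graded) rings, non-unital graded modules
(given by explicit action functions), graded homomorphisms of all degrees,
traces, torsion submodules, balanced tensor products, and graded Morita
contexts, following Dokuchaev–Simón, "Graded Equivalence for Graded
Idempotent Rings".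
-/

open DirectSum

section CommonDefs

variable {Γ : Type*} [Group Γ] {A B M N P Q : Type*}

/-- `M` is a left module over the non-unital ring `A` via the action `s`. -/
structure IsLMod (A M : Type*) [NonUnitalRing A] [AddCommGroup M] (s : A → M → M) : Prop where
  smul_add : ∀ (a : A) (m n : M), s a (m + n) = s a m + s a n
  add_smul : ∀ (a b : A) (m : M), s (a + b) m = s a m + s b m
  mul_smul : ∀ (a b : A) (m : M), s (a * b) m = s a (s b m)

/-- `M` is a right module over the non-unital ring `B` via the action `s`. -/
structure IsRMod (B M : Type*) [NonUnitalRing B] [AddCommGroup M] (s : M → B → M) : Prop where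
  add_smul : ∀ (m n : M) (b : B), s (m + n) b = s m b + s n b
  smul_add : ∀ (m : M) (a b : B), s m (a + b) = s m a + s m b
  smul_mul : ∀ (m : M) (a b : B), s m (a * b) = s (s m a) b

/-- The ring `A` is idempotent: `A² = A`. -/
def IsIdem (A : Type*) [NonUnitalRing A] : Prop :=
  ∀ a : A, a ∈ AddSubgroup.closure {x : A | ∃ y z : A, x = y * z}

/-- The left `A`-module with action `s` is unital: `AM = M`. -/
def IsUnitalL [NonUnitalRing A] [AddCommGroup M] (s : A → M → M) : Prop :=
  ∀ m : M, m ∈ AddSubgroup.closure {x : M | ∃ (a : A) (m' : M), x = s a m'}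

/-- The right `B`-module with action `s` is unital: `MB = M`. -/
def IsUnitalR [NonUnitalRing B] [AddCommGroup M] (s : M → B → M) : Prop :=
  ∀ m : M, m ∈ AddSubgroup.closure {x : M | ∃ (m' : M) (b : B), x = s m' b}

/-- The left `A`-module with action `s` is torsion-free: `Am = 0 → m = 0`. -/
def IsTorsionFreeL [NonUnitalRing A] [AddCommGroup M] (s : A → M → M) : Prop :=
  ∀ m : M, (∀ a : A, s a m = 0) → m = 0

/-- The right `B`-module with action `s` is torsion-free. -/
def IsTorsionFreeR [NonUnitalRing B] [AddCommGroup M] (s : M → B → M) : Prop :=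
  ∀ m : M, (∀ b : B, s m b = 0) → m = 0

/-- The family `𝒜` makes `A` a `Γ`-graded ring (multiplicativity of the grading;
the direct sum decomposition is recorded by a `DirectSum.Decomposition` instance). -/
def IsGRing [NonUnitalRing A] (𝒜 : Γ → AddSubgroup A) : Prop :=
  ∀ ⦃σ τ : Γ⦄ ⦃a b : A⦄, a ∈ 𝒜 σ → b ∈ 𝒜 τ → a * b ∈ 𝒜 (σ * τ)

/-- Grading compatibility for a left module: `A_σ · M_τ ⊆ M_{στ}`. -/
def IsGModL [NonUnitalRing A] [AddCommGroup M] (𝒜 : Γ → AddSubgroup A)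
    (ℳ : Γ → AddSubgroup M) (s : A → M → M) : Prop :=
  ∀ ⦃σ τ : Γ⦄ ⦃a : A⦄ ⦃m : M⦄, a ∈ 𝒜 σ → m ∈ ℳ τ → s a m ∈ ℳ (σ * τ)

/-- Grading compatibility for a right module: `M_τ · B_σ ⊆ M_{τσ}`. -/
def IsGModR [NonUnitalRing B] [AddCommGroup M] (ℬ : Γ → AddSubgroup B)
    (ℳ : Γ → AddSubgroup M) (s : M → B → M) : Prop :=
  ∀ ⦃σ τ : Γ⦄ ⦃m : M⦄ ⦃b : B⦄, m ∈ ℳ τ → b ∈ ℬ σ → s m b ∈ ℳ (τ * σ)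

/-- `f : M → N` is a homomorphism of left `A`-modules. -/
def IsLinL [NonUnitalRing A] [AddCommGroup M] [AddCommGroup N]
    (sM : A → M → M) (sN : A → N → N) (f : M →+ N) : Prop :=
  ∀ (a : A) (m : M), f (sM a m) = sN a (f m)

/-- `f : M → N` is a homomorphism of right `B`-modules. -/
def IsLinR [NonUnitalRing B] [AddCommGroup M] [AddCommGroup N]
    (sM : M → B → M) (sN : N → B → N) (f : M →+ N) : Prop :=
  ∀ (m : M) (b : B), f (sM m b) = sN (f m) b

/-- `f` is a graded homomorphism of degree `σ` (left module convention):
`f(M_τ) ⊆ N_{τσ}`. -/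
def IsDegL [AddCommGroup M] [AddCommGroup N] (ℳ : Γ → AddSubgroup M)
    (𝒩 : Γ → AddSubgroup N) (σ : Γ) (f : M →+ N) : Prop :=
  ∀ τ : Γ, ∀ m ∈ ℳ τ, f m ∈ 𝒩 (τ * σ)

/-- `f` is a graded homomorphism of degree `σ` (right module convention):
`f(M_τ) ⊆ N_{στ}`. -/
def IsDegR [AddCommGroup M] [AddCommGroup N] (ℳ : Γ → AddSubgroup M)
    (𝒩 : Γ → AddSubgroup N) (σ : Γ) (f : M →+ N) : Prop :=
  ∀ τ : Γ, ∀ m ∈ ℳ τ, f m ∈ 𝒩 (σ * τ)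

/-- `HOM_A(M,N)`: the additive group of graded left `A`-module homomorphisms
of all degrees (i.e. sums of homogeneous `A`-linear maps). -/
def HOML [NonUnitalRing A] [AddCommGroup M] [AddCommGroup N]
    (sM : A → M → M) (sN : A → N → N)
    (ℳ : Γ → AddSubgroup M) (𝒩 : Γ → AddSubgroup N) : AddSubgroup (M →+ N) :=
  AddSubgroup.closure {f | IsLinL sM sN f ∧ ∃ σ : Γ, IsDegL ℳ 𝒩 σ f}

/-- `HOM_B(M,N)` for right modules. -/
def HOMR [NonUnitalRing B] [AddCommGroup M] [AddCommGroup N]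
    (sM : M → B → M) (sN : N → B → N)
    (ℳ : Γ → AddSubgroup M) (𝒩 : Γ → AddSubgroup N) : AddSubgroup (M →+ N) :=
  AddSubgroup.closure {f | IsLinR sM sN f ∧ ∃ σ : Γ, IsDegR ℳ 𝒩 σ f}

/-- Given a subgroup `H` of homomorphisms `M →+ N` and a `C`-action on `M`
(`tw`), this is the subgroup `C·H` generated by the twisted maps
`c·f = f ∘ (tw c)`.  It models e.g. `B·HOM_A(P,N)` with `(b·f)(p) = f(pb)`. -/
def smulHOM [AddCommGroup M] [AddCommGroup N] (C : Type*)
    (H : AddSubgroup (M →+ N)) (tw : C → M → M) : AddSubgroup (M →+ N) :=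
  AddSubgroup.closure {g | ∃ (c : C) (f : M →+ N), f ∈ H ∧ ∀ m : M, g m = f (tw c m)}

/-- The graded trace `Tr_M(P)`: the additive subgroup of `M` generated by the
images of all graded homomorphisms `P → M` of arbitrary degree. -/
def TraceL [NonUnitalRing A] [AddCommGroup P] [AddCommGroup M]
    (sP : A → P → P) (sM : A → M → M)
    (𝓟 : Γ → AddSubgroup P) (ℳ : Γ → AddSubgroup M) : AddSubgroup M :=
  AddSubgroup.closure {x | ∃ f ∈ HOML sP sM 𝓟 ℳ, ∃ p : P, x = f p}

/-- The torsion part `t_A(M) = {m ∈ M | A·m = 0}`, as an additive subgroup. -/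
def torsionL [NonUnitalRing A] [AddCommGroup M] {s : A → M → M}
    (hM : IsLMod A M s) : AddSubgroup M where
  carrier := {m : M | ∀ a : A, s a m = 0}
  zero_mem' := by
    intro a
    have h := hM.smul_add a 0 0
    rw [add_zero] at h
    exact left_eq_add.mp h
  add_mem' := by
    intro m n hm hn a
    rw [hM.smul_add, hm a, hn a, add_zero]
  neg_mem' := by
    intro m hm a
    have h0 : s a (0 : M) = 0 := by
      have h := hM.smul_add a 0 0
      rw [add_zero] at h
      exact left_eq_add.mp h
    have h := hM.smul_add a m (-m)
    rw [add_neg_cancel, h0, hm a, zero_add] at h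
    exact h.symm

end CommonDefs

section Tensor

variable (B : Type*) {P Q : Type*} [AddCommGroup P] [AddCommGroup Q]

/-- Relations defining the balanced tensor product `P ⊗_B Q` of a right
`B`-module `P` (action `rs`) and a left `B`-module `Q` (action `ls`). -/
def TenRel (rs : P → B → P) (ls : B → Q → Q) : AddSubgroup (FreeAbelianGroup (P × Q)) :=
  AddSubgroup.closure
    ({x | ∃ (p p' : P) (q : Q), x = FreeAbelianGroup.of (p + p', q) -
        FreeAbelianGroup.of (p, q) - FreeAbelianGroup.of (p', q)} ∪
     {x | ∃ (p : P) (q q' : Q), x = FreeAbelianGroup.of (p, q + q') -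
        FreeAbelianGroup.of (p, q) - FreeAbelianGroup.of (p, q')} ∪
     {x | ∃ (p : P) (b : B) (q : Q), x = FreeAbelianGroup.of (rs p b, q) -
        FreeAbelianGroup.of (p, ls b q)})

/-- The balanced tensor product `P ⊗_B Q`. -/
abbrev Ten (rs : P → B → P) (ls : B → Q → Q) : Type _ :=
  FreeAbelianGroup (P × Q) ⧸ TenRel B rs ls

/-- The elementary tensor `p ⊗ q`. -/
def tmul {B : Type*} {rs : P → B → P} {ls : B → Q → Q} (p : P) (q : Q) :
    Ten B rs ls :=
  QuotientAddGroup.mk (FreeAbelianGroup.of (p, q))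

/-- The natural grading of the tensor product: the `ρ`-component is generated
by the `p ⊗ q` with `p, q` homogeneous of degrees multiplying to `ρ`. -/
def TenGr {Γ : Type*} [Group Γ] {B : Type*} {rs : P → B → P} {ls : B → Q → Q}
    (𝓟 : Γ → AddSubgroup P) (𝒬 : Γ → AddSubgroup Q) (ρ : Γ) :
    AddSubgroup (Ten B rs ls) :=
  AddSubgroup.closure
    {x | ∃ (σ τ : Γ) (p : P) (q : Q), p ∈ 𝓟 σ ∧ q ∈ 𝒬 τ ∧ σ * τ = ρ ∧ x = tmul p q}

end Tensor

section Morita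

/-- A graded Morita context `(A, B, P, Q, μ, ν)` between idempotent graded
rings, with the trace maps given by the balanced pairings
`pr = ⟨-,-⟩ : P × Q → A` and `br = [-,-] : Q × P → B`, both surjective. -/
structure GMoritaCtx (Γ : Type*) [Group Γ] (A B P Q : Type*)
    [NonUnitalRing A] [NonUnitalRing B] [AddCommGroup P] [AddCommGroup Q]
    (𝒜 : Γ → AddSubgroup A) (ℬ : Γ → AddSubgroup B)
    (𝓟 : Γ → AddSubgroup P) (𝒬 : Γ → AddSubgroup Q)
    (ap : A → P → P) (pb : P → B → P) (bq : B → Q → Q) (qa : Q → A → Q)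
    (pr : P → Q → A) (br : Q → P → B) : Prop where
  gradeA : IsGRing 𝒜
  gradeB : IsGRing ℬ
  idemA : IsIdem A
  idemB : IsIdem B
  lmodP : IsLMod A P ap
  rmodP : IsRMod B P pb
  bimodP : ∀ (a : A) (p : P) (b : B), pb (ap a p) b = ap a (pb p b)
  lmodQ : IsLMod B Q bq
  rmodQ : IsRMod A Q qa
  bimodQ : ∀ (b : B) (q : Q) (a : A), qa (bq b q) a = bq b (qa q a)
  unitalPl : IsUnitalL ap
  unitalPr : IsUnitalR pb
  unitalQl : IsUnitalL bq
  unitalQr : IsUnitalR qa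
  gradePl : IsGModL 𝒜 𝓟 ap
  gradePr : IsGModR ℬ 𝓟 pb
  gradeQl : IsGModL ℬ 𝒬 bq
  gradeQr : IsGModR 𝒜 𝒬 qa
  pr_addl : ∀ (p p' : P) (q : Q), pr (p + p') q = pr p q + pr p' q
  pr_addr : ∀ (p : P) (q q' : Q), pr p (q + q') = pr p q + pr p q'
  br_addl : ∀ (q q' : Q) (p : P), br (q + q') p = br q p + br q' p
  br_addr : ∀ (q : Q) (p p' : P), br q (p + p') = br q p + br q p'
  pr_bal : ∀ (p : P) (b : B) (q : Q), pr (pb p b) q = pr p (bq b q)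
  br_bal : ∀ (q : Q) (a : A) (p : P), br (qa q a) p = br q (ap a p)
  pr_linl : ∀ (a : A) (p : P) (q : Q), pr (ap a p) q = a * pr p q
  pr_linr : ∀ (p : P) (q : Q) (a : A), pr p (qa q a) = pr p q * a
  br_linl : ∀ (b : B) (q : Q) (p : P), br (bq b q) p = b * br q p
  br_linr : ∀ (q : Q) (p : P) (b : B), br q (pb p b) = br q p * b
  pr_graded : ∀ ⦃σ τ : Γ⦄ ⦃p : P⦄ ⦃q : Q⦄, p ∈ 𝓟 σ → q ∈ 𝒬 τ → pr p q ∈ 𝒜 (σ * τ)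
  br_graded : ∀ ⦃σ τ : Γ⦄ ⦃q : Q⦄ ⦃p : P⦄, q ∈ 𝒬 σ → p ∈ 𝓟 τ → br q p ∈ ℬ (σ * τ)
  assoc1 : ∀ (p' : P) (q : Q) (p : P), pb p' (br q p) = ap (pr p' q) p
  assoc2 : ∀ (q' : Q) (p : P) (q : Q), qa q' (pr p q) = bq (br q' p) q
  sur_pr : ∀ a : A, a ∈ AddSubgroup.closure {x : A | ∃ (p : P) (q : Q), x = pr p q}
  sur_br : ∀ b : B, b ∈ AddSubgroup.closure {x : B | ∃ (q : Q) (p : P), x = br q p}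

end Morita

section MyAux

variable {Γ : Type*} [Group Γ]

lemma IsLMod.smul_zero' {A M : Type*} [NonUnitalRing A] [AddCommGroup M] {s : A → M → M}
    (h : IsLMod A M s) (a : A) : s a 0 = 0 := by
  have := h.smul_add a 0 0
  rw [add_zero] at this
  exact (left_eq_add.mp this)

lemma IsLMod.zero_smul' {A M : Type*} [NonUnitalRing A] [AddCommGroup M] {s : A → M → M}
    (h : IsLMod A M s) (m : M) : s 0 m = 0 := by
  have := h.add_smul 0 0 m
  rw [add_zero] at this
  exact (left_eq_add.mp this)

lemma IsLMod.smul_neg' {A M : Type*} [NonUnitalRing A] [AddCommGroup M] {s : A → M → M}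
    (h : IsLMod A M s) (a : A) (m : M) : s a (-m) = - s a m := by
  have h2 := h.smul_add a m (-m)
  rw [add_neg_cancel, h.smul_zero'] at h2
  exact (eq_neg_of_add_eq_zero_right h2.symm)

lemma IsRMod.smul_zero'' {B M : Type*} [NonUnitalRing B] [AddCommGroup M] {s : M → B → M}
    (h : IsRMod B M s) (m : M) : s m 0 = 0 := by
  have := h.smul_add m 0 0
  rw [add_zero] at this
  exact (left_eq_add.mp this)

section TenAux

variable {B P Q : Type*} [NonUnitalRing B] [AddCommGroup P] [AddCommGroup Q]
variable {rs : P → B → P} {ls : B → Q → Q}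

lemma mk_rel_zero {x : FreeAbelianGroup (P × Q)} (hx : x ∈ TenRel B rs ls) :
    (QuotientAddGroup.mk x : Ten B rs ls) = 0 :=
  (QuotientAddGroup.eq_zero_iff x).mpr hx

lemma tmul_add_left (p p' : P) (q : Q) :
    (tmul (p + p') q : Ten B rs ls) = tmul p q + tmul p' q := by
  have h := mk_rel_zero (rs := rs) (ls := ls)
    (AddSubgroup.subset_closure (Or.inl (Or.inl ⟨p, p', q, rfl⟩)))
  rw [QuotientAddGroup.mk_sub, QuotientAddGroup.mk_sub, sub_sub, sub_eq_zero] at h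
  simpa [tmul] using h

lemma tmul_add_right (p : P) (q q' : Q) :
    (tmul p (q + q') : Ten B rs ls) = tmul p q + tmul p q' := by
  have h := mk_rel_zero (rs := rs) (ls := ls)
    (AddSubgroup.subset_closure (Or.inl (Or.inr ⟨p, q, q', rfl⟩)))
  rw [QuotientAddGroup.mk_sub, QuotientAddGroup.mk_sub, sub_sub, sub_eq_zero] at h
  simpa [tmul] using h

lemma tmul_bal (p : P) (b : B) (q : Q) :
    (tmul (rs p b) q : Ten B rs ls) = tmul p (ls b q) := by
  have h := mk_rel_zero (rs := rs) (ls := ls)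
    (AddSubgroup.subset_closure (Or.inr ⟨p, b, q, rfl⟩))
  rw [QuotientAddGroup.mk_sub, sub_eq_zero] at h
  simpa [tmul] using h

lemma tmul_zero_right (p : P) : (tmul p (0 : Q) : Ten B rs ls) = 0 := by
  have := tmul_add_right (rs := rs) (ls := ls) p 0 0
  rw [add_zero] at this
  exact (left_eq_add.mp this)

lemma tmul_zero_left (q : Q) : (tmul (0 : P) q : Ten B rs ls) = 0 := by
  have := tmul_add_left (rs := rs) (ls := ls) 0 0 q
  rw [add_zero] at this
  exact (left_eq_add.mp this)

lemma ten_ind {S : AddSubgroup (Ten B rs ls)} (h : ∀ p q, tmul p q ∈ S) :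
    ∀ t, t ∈ S := by
  intro t
  obtain ⟨w, rfl⟩ := QuotientAddGroup.mk_surjective t
  induction w using FreeAbelianGroup.induction_on with
  | zero => exact S.zero_mem
  | of x => exact h x.1 x.2
  | neg x ih => rw [QuotientAddGroup.mk_neg]; exact S.neg_mem ih
  | add x y ihx ihy => rw [QuotientAddGroup.mk_add]; exact S.add_mem ihx ihy

end TenAux

/-- Every element of a graded module lies in any subgroup containing all
homogeneous elements. -/
lemma decompose_mem {K : Type*} [DecidableEq Γ] [AddCommGroup K]
    (𝒦 : Γ → AddSubgroup K) [DirectSum.Decomposition 𝒦]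
    {S : AddSubgroup K} (h : ∀ ρ : Γ, ∀ k ∈ 𝒦 ρ, k ∈ S) (k : K) : k ∈ S := by
  classical
  rw [← DirectSum.sum_support_decompose 𝒦 k]
  exact S.sum_mem fun i _ => h i _ (SetLike.coe_mem _)

end MyAux

section LinAux

variable {Γ : Type*} [Group Γ]

/-- Auxiliary: negation lemmas for `tmul`. -/
lemma tmul_neg_right {B P Q : Type*} [NonUnitalRing B] [AddCommGroup P] [AddCommGroup Q]
    {rs : P → B → P} {ls : B → Q → Q} (p : P) (q : Q) :
    (tmul p (-q) : Ten B rs ls) = - tmul p q := by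
  have h := tmul_add_right (rs := rs) (ls := ls) p q (-q)
  rw [add_neg_cancel, tmul_zero_right] at h
  exact eq_neg_of_add_eq_zero_right h.symm

/-- Every element of `HOM_A(M,K)` is `A`-linear. -/
lemma HOML_lin {A M K : Type*} [NonUnitalRing A]
    [AddCommGroup M] [AddCommGroup K] {sM : A → M → M} {sK : A → K → K}
    (hK : IsLMod A K sK) (ℳ : Γ → AddSubgroup M) (𝒦 : Γ → AddSubgroup K)
    {f : M →+ K} (hf : f ∈ HOML sM sK ℳ 𝒦) : IsLinL sM sK f := by
  let S : AddSubgroup (M →+ K) :=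
    { carrier := {f | IsLinL sM sK f}
      zero_mem' := fun a m => (hK.smul_zero' a).symm
      add_mem' := fun {f g} hf hg a m => by
        simp only [AddMonoidHom.add_apply, hf a m, hg a m, hK.smul_add]
      neg_mem' := fun {f} hf a m => by
        simp only [AddMonoidHom.neg_apply, hf a m, hK.smul_neg'] }
  exact (AddSubgroup.closure_le S).mpr (fun g hg => hg.1) hf

/-- Every element of `B·HOM_A(P,K)` is `A`-linear. -/
lemma smulHOM_lin {A B P K : Type*} [NonUnitalRing A] [NonUnitalRing B]
    [AddCommGroup P] [AddCommGroup K] {ap : A → P → P} {pb : P → B → P}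
    {sK : A → K → K} (hK : IsLMod A K sK)
    (bimod : ∀ (a : A) (p : P) (b : B), pb (ap a p) b = ap a (pb p b))
    (𝓟 : Γ → AddSubgroup P) (𝒦 : Γ → AddSubgroup K)
    {f : P →+ K} (hf : f ∈ smulHOM B (HOML ap sK 𝓟 𝒦) (fun (b : B) (p : P) => pb p b)) :
    IsLinL ap sK f := by
  let S : AddSubgroup (P →+ K) :=
    { carrier := {f | IsLinL ap sK f}
      zero_mem' := fun a m => (hK.smul_zero' a).symm
      add_mem' := fun {f g} hf hg a m => by
        simp only [AddMonoidHom.add_apply, hf a m, hg a m, hK.smul_add]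
      neg_mem' := fun {f} hf a m => by
        simp only [AddMonoidHom.neg_apply, hf a m, hK.smul_neg'] }
  refine (AddSubgroup.closure_le S).mpr ?_ hf
  rintro g ⟨b, f0, hf0, hg⟩ a m
  calc g (ap a m) = f0 (pb (ap a m) b) := hg _
    _ = f0 (ap a (pb m b)) := by rw [bimod]
    _ = sK a (f0 (pb m b)) := HOML_lin hK 𝓟 𝒦 hf0 a _
    _ = sK a (g m) := by rw [hg]

end LinAux

universe u v

/-- Given a graded Morita context with idempotent graded
rings, unital bimodules and surjective trace maps, and a unital torsion-free
graded left `A`-module `K`, the canonical map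
`φ : P ⊗_B (B·HOM_A(P,K)) → A·HOM_A(A,K)`, `φ(p⊗f)(x) = f(xp) = x·f(p)`, is a
surjective graded left `A`-module homomorphism of degree `e` whose kernel is
left `A`-torsion. -/
theorem phi_epimorphism_torsion_kernel
    {Γ : Type v} {A B P Q K : Type u} [Group Γ] [DecidableEq Γ]
    [NonUnitalRing A] [NonUnitalRing B] [AddCommGroup P] [AddCommGroup Q]
    [AddCommGroup K]
    (𝒜 : Γ → AddSubgroup A) (ℬ : Γ → AddSubgroup B)
    (𝓟 : Γ → AddSubgroup P) (𝒬 : Γ → AddSubgroup Q) (𝒦 : Γ → AddSubgroup K)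
    [DirectSum.Decomposition 𝒜] [DirectSum.Decomposition ℬ]
    [DirectSum.Decomposition 𝓟] [DirectSum.Decomposition 𝒬]
    [DirectSum.Decomposition 𝒦]
    (ap : A → P → P) (pb : P → B → P) (bq : B → Q → Q) (qa : Q → A → Q)
    (pr : P → Q → A) (br : Q → P → B)
    (ctx : GMoritaCtx Γ A B P Q 𝒜 ℬ 𝓟 𝒬 ap pb bq qa pr br)
    (sK : A → K → K) (hK : IsLMod A K sK) (hKu : IsUnitalL sK)
    (hKtf : IsTorsionFreeL sK) (hKg : IsGModL 𝒜 𝒦 sK)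
    -- the left `B`-action on `H := B·HOM_A(P,K)`, `(b·f)(p) = f(pb)`
    (lsH : B → ↥(smulHOM B (HOML ap sK 𝓟 𝒦) (fun (b : B) (p : P) => pb p b)) →
      ↥(smulHOM B (HOML ap sK 𝓟 𝒦) (fun (b : B) (p : P) => pb p b)))
    (hlsH : ∀ b f (p : P), ((lsH b f : _) : P →+ K) p = (f : P →+ K) (pb p b))
    -- `φ : P ⊗_B H → (A →+ K)` with `φ(p⊗f)(x) = f(xp)`
    (φ : Ten B pb lsH →+ (A →+ K))
    (hφ : ∀ p f (x : A), φ (tmul p f) x = ((f : P →+ K) : P → K) (ap x p))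
    -- the left `A`-action on `P ⊗_B H`, `a·(p⊗f) = (ap)⊗f`
    (aT : A → Ten B pb lsH →+ Ten B pb lsH)
    (haT : ∀ (a : A) p f, aT a (tmul p f) = tmul (ap a p) f) :
    -- φ lands in `A·HOM_A(A,K)`
    (∀ t, φ t ∈ smulHOM A (HOML (fun a x : A => a * x) sK 𝒜 𝒦)
        (fun (a : A) (x : A) => x * a)) ∧
    -- φ is left `A`-linear: `φ(a·t) = a·φ(t)` where `(a·g)(x) = g(xa)`
    (∀ (a : A) t (x : A), φ (aT a t) x = φ t (x * a)) ∧
    -- φ is graded of degree `e`: `p` homogeneous of degree `σ` and `f` of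
    -- degree `τ` give `φ(p⊗f)` of degree `στ`
    (∀ (σ τ : Γ) (p : P)
      (f : ↥(smulHOM B (HOML ap sK 𝓟 𝒦) (fun (b : B) (p : P) => pb p b))),
      p ∈ 𝓟 σ → IsDegL 𝓟 𝒦 τ (f : P →+ K) →
      IsDegL 𝒜 𝒦 (σ * τ) (φ (tmul p f))) ∧
    -- φ is surjective onto `A·HOM_A(A,K)`
    (∀ g ∈ smulHOM A (HOML (fun a x : A => a * x) sK 𝒜 𝒦)
        (fun (a : A) (x : A) => x * a), ∃ t, φ t = g) ∧
    -- the kernel of φ is left `A`-torsion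
    (∀ t, φ t = 0 → ∀ a : A, aT a t = 0) := by
  classical
  -- `A`-linearity of elements of `H = B·HOM_A(P,K)`
  have hPlin : ∀ (f : ↥(smulHOM B (HOML ap sK 𝓟 𝒦) (fun (b : B) (p : P) => pb p b)))
      (a : A) (m : P), (f : P →+ K) (ap a m) = sK a ((f : P →+ K) m) :=
    fun f => smulHOM_lin hK ctx.bimodP 𝓟 𝒦 f.2
  -- the evaluation hom `k ↦ (x ↦ x·k)`
  let evalKHom : K →+ (A →+ K) := AddMonoidHom.mk'
    (fun k => AddMonoidHom.mk' (fun x => sK x k) (fun x y => hK.add_smul x y k))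
    (fun k k' => by ext x; exact hK.smul_add x k k')
  have evalK_apply : ∀ (k : K) (x : A), evalKHom k x = sK x k := fun _ _ => rfl
  have evalK_mem : ∀ k : K, evalKHom k ∈ HOML (fun a x : A => a * x) sK 𝒜 𝒦 := by
    intro k
    have : k ∈ (HOML (fun a x : A => a * x) sK 𝒜 𝒦).comap evalKHom := by
      refine decompose_mem 𝒦 (fun ρ k hk => ?_) k
      exact AddSubgroup.subset_closure
        ⟨fun a x => hK.mul_smul a x k, ρ, fun τ x hx => hKg hx hk⟩
    exact this
  have evalK_mem2 : ∀ k : K, evalKHom k ∈ smulHOM A (HOML (fun a x : A => a * x) sK 𝒜 𝒦)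
      (fun (a : A) (x : A) => x * a) := by
    intro k
    have : k ∈ (smulHOM A (HOML (fun a x : A => a * x) sK 𝒜 𝒦)
        (fun (a : A) (x : A) => x * a)).comap evalKHom := by
      refine (AddSubgroup.closure_le _).mpr ?_ (hKu k)
      rintro x ⟨a, k', rfl⟩
      refine AddSubgroup.subset_closure ⟨a, evalKHom k', evalK_mem k', fun m => ?_⟩
      exact (hK.mul_smul m a k').symm
    exact this
  -- `φ(p⊗f) = evalK (f p)`
  have phi_tmul_eq : ∀ (p : P) f, φ (tmul p f) = evalKHom ((f : P →+ K) p) := by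
    intro p f
    ext x
    rw [hφ, evalK_apply]
    exact hPlin f x p
  -- Conjunct 1
  have conj1 : ∀ t, φ t ∈ smulHOM A (HOML (fun a x : A => a * x) sK 𝒜 𝒦)
      (fun (a : A) (x : A) => x * a) := by
    intro t
    refine ten_ind (S := (smulHOM A (HOML (fun a x : A => a * x) sK 𝒜 𝒦)
      (fun (a : A) (x : A) => x * a)).comap φ) (fun p f => AddSubgroup.mem_comap.mpr ?_) t
    rw [phi_tmul_eq]
    exact evalK_mem2 _
  -- Conjunct 2
  have conj2 : ∀ (a : A) t (x : A), φ (aT a t) x = φ t (x * a) := by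
    intro a t
    let S : AddSubgroup (Ten B pb lsH) :=
      { carrier := {t | ∀ x, φ (aT a t) x = φ t (x * a)}
        zero_mem' := fun x => by simp
        add_mem' := fun {t t'} ht ht' x => by
          simp only [map_add, AddMonoidHom.add_apply, ht x, ht' x]
        neg_mem' := fun {t} ht x => by
          simp only [map_neg, AddMonoidHom.neg_apply, ht x] }
    refine ten_ind (S := S) (fun p f x => ?_) t
    show φ (aT a (tmul p f)) x = φ (tmul p f) (x * a)
    rw [haT, hφ, hφ, ctx.lmodP.mul_smul]
  -- Conjunct 3
  have conj3 : ∀ (σ τ : Γ) (p : P)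
      (f : ↥(smulHOM B (HOML ap sK 𝓟 𝒦) (fun (b : B) (p : P) => pb p b))),
      p ∈ 𝓟 σ → IsDegL 𝓟 𝒦 τ (f : P →+ K) →
      IsDegL 𝒜 𝒦 (σ * τ) (φ (tmul p f)) := by
    intro σ τ p f hp hf ρ x hx
    rw [hφ]
    have h1 := hf (ρ * σ) (ap x p) (ctx.gradePl hx hp)
    rwa [mul_assoc] at h1
  -- material for Conjunct 4
  have pr_zero_r : ∀ m : P, pr m 0 = 0 := by
    intro m
    have := ctx.pr_addr m 0 0
    rw [add_zero] at this
    exact (left_eq_add.mp this)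
  have pr_neg_r : ∀ (m : P) (q : Q), pr m (-q) = - pr m q := by
    intro m q
    have := ctx.pr_addr m q (-q)
    rw [add_neg_cancel, pr_zero_r] at this
    exact eq_neg_of_add_eq_zero_right this.symm
  let evalP : (A →+ K) → Q → (P →+ K) := fun h q => AddMonoidHom.mk'
    (fun m => h (pr m q)) (fun m m' => by
      show h (pr (m + m') q) = h (pr m q) + h (pr m' q)
      rw [ctx.pr_addl, map_add])
  have evalP_apply : ∀ (h : A →+ K) (q : Q) (m : P), evalP h q m = h (pr m q) :=
    fun _ _ _ => rfl
  have evalP_mem1 : ∀ h ∈ HOML (fun a x : A => a * x) sK 𝒜 𝒦, ∀ q : Q,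
      evalP h q ∈ HOML ap sK 𝓟 𝒦 := by
    intro h hh
    let evalPH : Q → (A →+ K) →+ (P →+ K) := fun q => AddMonoidHom.mk' (fun h => evalP h q)
      (fun h h' => by ext m; rfl)
    suffices hmem : h ∈ ⨅ q : Q, (HOML ap sK 𝓟 𝒦).comap (evalPH q) by
      intro q
      exact AddSubgroup.mem_iInf.mp hmem q
    refine (AddSubgroup.closure_le _).mpr ?_ hh
    rintro h0 ⟨hlin, τ, hdeg⟩
    rw [SetLike.mem_coe, AddSubgroup.mem_iInf]
    intro q
    show evalP h0 q ∈ HOML ap sK 𝓟 𝒦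
    let Sq : AddSubgroup Q :=
      { carrier := {q | evalP h0 q ∈ HOML ap sK 𝓟 𝒦}
        zero_mem' := by
          have h1 : evalP h0 0 = 0 := by
            ext m
            show h0 (pr m 0) = 0
            rw [pr_zero_r, map_zero]
          show evalP h0 0 ∈ HOML ap sK 𝓟 𝒦
          rw [h1]
          exact AddSubgroup.zero_mem _
        add_mem' := fun {q q'} hq hq' => by
          have h1 : evalP h0 (q + q') = evalP h0 q + evalP h0 q' := by
            ext m
            show h0 (pr m (q + q')) = h0 (pr m q) + h0 (pr m q')
            rw [ctx.pr_addr, map_add]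
          show evalP h0 (q + q') ∈ HOML ap sK 𝓟 𝒦
          rw [h1]
          exact AddSubgroup.add_mem _ hq hq'
        neg_mem' := fun {q} hq => by
          have h1 : evalP h0 (-q) = - evalP h0 q := by
            ext m
            show h0 (pr m (-q)) = - h0 (pr m q)
            rw [pr_neg_r, map_neg]
          show evalP h0 (-q) ∈ HOML ap sK 𝓟 𝒦
          rw [h1]
          exact AddSubgroup.neg_mem _ hq }
    have hq2 : q ∈ Sq := decompose_mem 𝒬 (S := Sq) (fun ρ q hq => ?_) q
    · exact hq2
    refine AddSubgroup.subset_closure ⟨fun a m => ?_, ρ * τ, fun υ m hm => ?_⟩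
    · show h0 (pr (ap a m) q) = sK a (h0 (pr m q))
      rw [ctx.pr_linl]
      exact hlin a _
    · show h0 (pr m q) ∈ 𝒦 (υ * (ρ * τ))
      have h2 := hdeg (υ * ρ) _ (ctx.pr_graded hm hq)
      rwa [mul_assoc] at h2
  have evalP_mem2 : ∀ h ∈ HOML (fun a x : A => a * x) sK 𝒜 𝒦, ∀ q : Q,
      evalP h q ∈ smulHOM B (HOML ap sK 𝓟 𝒦) (fun (b : B) (p : P) => pb p b) := by
    intro h hh q
    let Sq : AddSubgroup Q :=
      { carrier := {q | evalP h q ∈ smulHOM B (HOML ap sK 𝓟 𝒦) (fun (b : B) (p : P) => pb p b)}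
        zero_mem' := by
          have h1 : evalP h 0 = 0 := by
            ext m
            show h (pr m 0) = 0
            rw [pr_zero_r, map_zero]
          show evalP h 0 ∈ smulHOM B (HOML ap sK 𝓟 𝒦) (fun (b : B) (p : P) => pb p b)
          rw [h1]
          exact AddSubgroup.zero_mem _
        add_mem' := fun {q q'} hq hq' => by
          have h1 : evalP h (q + q') = evalP h q + evalP h q' := by
            ext m
            show h (pr m (q + q')) = h (pr m q) + h (pr m q')
            rw [ctx.pr_addr, map_add]
          show evalP h (q + q') ∈ smulHOM B (HOML ap sK 𝓟 𝒦) (fun (b : B) (p : P) => pb p b)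
          rw [h1]
          exact AddSubgroup.add_mem _ hq hq'
        neg_mem' := fun {q} hq => by
          have h1 : evalP h (-q) = - evalP h q := by
            ext m
            show h (pr m (-q)) = - h (pr m q)
            rw [pr_neg_r, map_neg]
          show evalP h (-q) ∈ smulHOM B (HOML ap sK 𝓟 𝒦) (fun (b : B) (p : P) => pb p b)
          rw [h1]
          exact AddSubgroup.neg_mem _ hq }
    have hq2 : q ∈ Sq := (AddSubgroup.closure_le Sq).mpr ?_ (ctx.unitalQl q)
    · exact hq2
    rintro x ⟨b, q', rfl⟩
    show evalP h (bq b q') ∈ smulHOM B (HOML ap sK 𝓟 𝒦) (fun (b : B) (p : P) => pb p b)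
    refine AddSubgroup.subset_closure ⟨b, evalP h q', evalP_mem1 h hh q', fun m => ?_⟩
    show h (pr m (bq b q')) = h (pr (pb m b) q')
    rw [ctx.pr_bal]
  -- Conjunct 4
  have conj4 : ∀ g ∈ smulHOM A (HOML (fun a x : A => a * x) sK 𝒜 𝒦)
      (fun (a : A) (x : A) => x * a), ∃ t, φ t = g := by
    intro g hg
    suffices hmem : g ∈ φ.range by exact hmem
    refine (AddSubgroup.closure_le _).mpr ?_ hg
    rintro g0 ⟨c, h, hh, hg0⟩
    let evalA : A → (A →+ K) := fun c => AddMonoidHom.mk'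
      (fun x => h (x * c)) (fun x y => by
        show h ((x + y) * c) = h (x * c) + h (y * c)
        rw [add_mul, map_add])
    have key : ∀ c : A, evalA c ∈ φ.range := by
      intro c
      let Sc : AddSubgroup A :=
        { carrier := {c | evalA c ∈ φ.range}
          zero_mem' := by
            have h1 : evalA 0 = 0 := by
              ext x
              show h (x * 0) = 0
              rw [mul_zero, map_zero]
            show evalA 0 ∈ φ.range
            rw [h1]
            exact AddSubgroup.zero_mem _
          add_mem' := fun {c c'} hc hc' => by
            have h1 : evalA (c + c') = evalA c + evalA c' := by
              ext x
              show h (x * (c + c')) = h (x * c) + h (x * c')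
              rw [mul_add, map_add]
            show evalA (c + c') ∈ φ.range
            rw [h1]
            exact AddSubgroup.add_mem _ hc hc'
          neg_mem' := fun {c} hc => by
            have h1 : evalA (-c) = - evalA c := by
              ext x
              show h (x * (-c)) = - h (x * c)
              rw [mul_neg, map_neg]
            show evalA (-c) ∈ φ.range
            rw [h1]
            exact AddSubgroup.neg_mem _ hc }
      have hc2 : c ∈ Sc := (AddSubgroup.closure_le Sc).mpr ?_ (ctx.sur_pr c)
      · exact hc2
      rintro x ⟨p, q, rfl⟩
      show evalA (pr p q) ∈ φ.range
      refine ⟨tmul p ⟨evalP h q, evalP_mem2 h hh q⟩, ?_⟩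
      ext x
      rw [hφ]
      show h (pr (ap x p) q) = h (x * pr p q)
      rw [ctx.pr_linl]
    obtain ⟨t, ht⟩ := key c
    exact ⟨t, by rw [ht]; exact (AddMonoidHom.ext hg0).symm⟩
  -- material for Conjunct 5
  have aT_add : ∀ (a a' : A) (t : Ten B pb lsH), aT (a + a') t = aT a t + aT a' t := by
    intro a a' t
    let S : AddSubgroup (Ten B pb lsH) :=
      { carrier := {t | aT (a + a') t = aT a t + aT a' t}
        zero_mem' := by simp
        add_mem' := fun {t t'} ht ht' => by
          show aT (a + a') (t + t') = aT a (t + t') + aT a' (t + t')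
          rw [map_add, ht, ht', map_add, map_add]
          abel
        neg_mem' := fun {t} ht => by
          show aT (a + a') (-t) = aT a (-t) + aT a' (-t)
          rw [map_neg, ht, map_neg, map_neg]
          abel }
    refine ten_ind (S := S) (fun p f => ?_) t
    show aT (a + a') (tmul p f) = aT a (tmul p f) + aT a' (tmul p f)
    rw [haT, haT, haT, ctx.lmodP.add_smul, tmul_add_left]
  have aT_zero : ∀ t : Ten B pb lsH, aT 0 t = 0 := by
    intro t
    let S : AddSubgroup (Ten B pb lsH) :=
      { carrier := {t | aT 0 t = 0}
        zero_mem' := by simp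
        add_mem' := fun {t t'} ht ht' => by
          show aT 0 (t + t') = 0
          rw [map_add, ht, ht', add_zero]
        neg_mem' := fun {t} ht => by
          show aT 0 (-t) = 0
          rw [map_neg, ht, neg_zero] }
    refine ten_ind (S := S) (fun p f => ?_) t
    show aT 0 (tmul p f) = 0
    rw [haT, ctx.lmodP.zero_smul', tmul_zero_left]
  have lsH_add_b : ∀ (b b' : B) f, lsH (b + b') f = lsH b f + lsH b' f := by
    intro b b' f
    apply Subtype.ext
    ext m
    rw [AddSubgroup.coe_add, AddMonoidHom.add_apply, hlsH, hlsH, hlsH,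
      ctx.rmodP.smul_add, map_add]
  have lsH_add_f : ∀ (b : B) f f', lsH b (f + f') = lsH b f + lsH b f' := by
    intro b f f'
    apply Subtype.ext
    ext m
    rw [AddSubgroup.coe_add, AddMonoidHom.add_apply, hlsH, hlsH, hlsH,
      AddSubgroup.coe_add, AddMonoidHom.add_apply]
  have lsH_mul : ∀ (b b' : B) f, lsH (b * b') f = lsH b (lsH b' f) := by
    intro b b' f
    apply Subtype.ext
    ext m
    rw [hlsH, hlsH, hlsH, ctx.rmodP.smul_mul]
  -- Conjunct 5
  have conj5 : ∀ t, φ t = 0 → ∀ a : A, aT a t = 0 := by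
    intro t ht a
    have key : ∀ (p : P) (q : Q), aT (pr p q) t = 0 := by
      intro p q
      let S0 : FreeAbelianGroup
          (P × ↥(smulHOM B (HOML ap sK 𝓟 𝒦) (fun (b : B) (p : P) => pb p b))) →+
          ↥(smulHOM B (HOML ap sK 𝓟 𝒦) (fun (b : B) (p : P) => pb p b)) :=
        FreeAbelianGroup.lift (fun x => lsH (br q x.1) x.2)
      have hker : TenRel B pb lsH ≤ S0.ker := by
        refine (AddSubgroup.closure_le _).mpr ?_
        rintro x ((⟨p1, p2, f, rfl⟩ | ⟨p1, f1, f2, rfl⟩) | ⟨p1, b, f, rfl⟩) <;>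
          simp only [SetLike.mem_coe, AddMonoidHom.mem_ker, map_sub,
            FreeAbelianGroup.lift_apply_of, S0]
        · rw [ctx.br_addr, lsH_add_b]
          abel
        · rw [lsH_add_f]
          abel
        · rw [ctx.br_linr, lsH_mul, sub_self]
      let S : Ten B pb lsH →+
          ↥(smulHOM B (HOML ap sK 𝓟 𝒦) (fun (b : B) (p : P) => pb p b)) :=
        QuotientAddGroup.lift _ S0 hker
      have S_tmul : ∀ p' f, S (tmul p' f) = lsH (br q p') f := by
        intro p' f
        show S0 (FreeAbelianGroup.of (p', f)) = lsH (br q p') f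
        exact FreeAbelianGroup.lift_apply_of _ _
      have S_eval : ∀ t m, ((S t : _) : P →+ K) m = φ t (pr m q) := by
        intro t
        let S2 : AddSubgroup (Ten B pb lsH) :=
          { carrier := {t | ∀ m, ((S t : _) : P →+ K) m = φ t (pr m q)}
            zero_mem' := fun m => by simp
            add_mem' := fun {t t'} h1 h2 m => by
              simp only [map_add, AddSubgroup.coe_add, AddMonoidHom.add_apply, h1 m, h2 m]
            neg_mem' := fun {t} h1 m => by
              simp only [map_neg, AddSubgroup.coe_neg, AddMonoidHom.neg_apply, h1 m] }
        refine ten_ind (S := S2) (fun p' f m => ?_) t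
        show ((S (tmul p' f) : _) : P →+ K) m = φ (tmul p' f) (pr m q)
        rw [S_tmul, hlsH, hφ, ctx.assoc1]
      have hS0 : S t = 0 := by
        apply Subtype.ext
        ext m
        have h1 := S_eval t m
        rw [ht] at h1
        simpa using h1
      have hrepr : aT (pr p q) t = tmul p (S t) := by
        let S3 : AddSubgroup (Ten B pb lsH) :=
          { carrier := {t | aT (pr p q) t = tmul p (S t)}
            zero_mem' := by
              show aT (pr p q) 0 = tmul p (S 0)
              rw [map_zero, map_zero, tmul_zero_right]
            add_mem' := fun {t t'} h1 h2 => by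
              show aT (pr p q) (t + t') = tmul p (S (t + t'))
              rw [map_add, h1, h2, map_add, tmul_add_right]
            neg_mem' := fun {t} h1 => by
              show aT (pr p q) (-t) = tmul p (S (-t))
              rw [map_neg, h1, map_neg, tmul_neg_right] }
        refine ten_ind (S := S3) (fun p' f => ?_) t
        show aT (pr p q) (tmul p' f) = tmul p (S (tmul p' f))
        rw [haT, S_tmul, ← ctx.assoc1]
        exact tmul_bal p (br q p') f
      rw [hrepr, hS0, tmul_zero_right]
    let Sa : AddSubgroup A :=
      { carrier := {a | aT a t = 0}
        zero_mem' := aT_zero t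
        add_mem' := fun {a a'} ha ha' => by
          show aT (a + a') t = 0
          rw [aT_add, ha, ha', add_zero]
        neg_mem' := fun {a} ha => by
          show aT (-a) t = 0
          have h2 := aT_add a (-a) t
          rw [add_neg_cancel, aT_zero, ha, zero_add] at h2
          exact h2.symm }
    have ha2 : a ∈ Sa := (AddSubgroup.closure_le Sa).mpr ?_ (ctx.sur_pr a)
    · exact ha2
    rintro x ⟨p, q, rfl⟩
    exact key p q
  exact ⟨conj1, conj2, conj3, conj4, conj5⟩
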